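/- arXiv:1911.00358 — 7 statements merged into one kernel-verified Lean document; each statement's English description precedes it below -/
import Mathlib

section
/- For every integer n ≥ 2, the (n+1)-dimensional n-ary Filippov algebra C₁ degenerates to B; that is, the structure of B lies in the closure of the GL(V)-orbit of the structure of C₁. -/
open Function Submodule

/-! Common framework: `V = ℂ^{n+1}`, `n`-ary multiplications as functions
`(Fin n → V) → V`, the action of `GL(V)` on them, orbits, and the
(n+1)-dimensional n-ary Filippov algebras of Kaygorodov–Volkov, each described
as an alternating `n`-linear map by its values on the increasing tuples of
distinct standard basis vectors (0-indexed: `bt n j` is the tuple omitting `e j`). -/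

/-- The underlying space `V = ℂ^{n+1}`. -/
abbrev nV (n : ℕ) : Type := Fin (n + 1) → ℂ

/-- The `j`-th standard basis vector of `V` (0-indexed). -/
def sb (n : ℕ) (j : Fin (n + 1)) : nV n := Pi.single j 1

/-- The increasing `n`-tuple of standard basis vectors omitting `e j`. -/
def bt (n : ℕ) (j : Fin (n + 1)) : Fin n → nV n := fun k => sb n (j.succAbove k)

/-- The action of `GL(V)` (invertible linear maps) on `n`-ary multiplications:
`(g • μ)(x₁, …, xₙ) = g (μ (g⁻¹ x₁, …, g⁻¹ xₙ))`. -/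
noncomputable def glAct (n : ℕ) (g : nV n ≃ₗ[ℂ] nV n) (μ : (Fin n → nV n) → nV n) :
    (Fin n → nV n) → nV n :=
  fun x => g (μ fun i => g.symm (x i))

/-- The `GL(V)`-orbit of an `n`-ary multiplication. -/
def glOrbit (n : ℕ) (μ : (Fin n → nV n) → nV n) : Set ((Fin n → nV n) → nV n) :=
  {ν | ∃ g : nV n ≃ₗ[ℂ] nV n, ν = glAct n g μ}

/-- The algebra `B`: `[e₂, …, e_{n+1}] = e₁` (0-indexed: the tuple omitting `e 0`
maps to `e 0`), all other increasing basis products zero. -/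
def IsB (n : ℕ) (μ : AlternatingMap ℂ (nV n) (nV n) (Fin n)) : Prop :=
  μ (bt n 0) = sb n 0 ∧ ∀ j : Fin (n + 1), j ≠ 0 → μ (bt n j) = 0

/-- The algebra `C₁`: `[e₂, …, e_{n+1}] = e₁`, `[e₁, e₃, …, e_{n+1}] = e₂`. -/
def IsC1 (n : ℕ) (μ : AlternatingMap ℂ (nV n) (nV n) (Fin n)) : Prop :=
  μ (bt n 0) = sb n 0 ∧ μ (bt n 1) = sb n 1 ∧
    ∀ j : Fin (n + 1), j ≠ 0 → j ≠ 1 → μ (bt n j) = 0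

/-- The algebra `C₂(α)`: `[e₂, …, e_{n+1}] = α e₁ + e₂`, `[e₁, e₃, …, e_{n+1}] = e₂`. -/
def IsC2 (n : ℕ) (α : ℂ) (μ : AlternatingMap ℂ (nV n) (nV n) (Fin n)) : Prop :=
  μ (bt n 0) = α • sb n 0 + sb n 1 ∧ μ (bt n 1) = sb n 1 ∧
    ∀ j : Fin (n + 1), j ≠ 0 → j ≠ 1 → μ (bt n j) = 0

/-- The algebra `C₃`: `[e₁, e₃, …, e_{n+1}] = e₁`, `[e₂, e₃, …, e_{n+1}] = e₂`. -/
def IsC3 (n : ℕ) (μ : AlternatingMap ℂ (nV n) (nV n) (Fin n)) : Prop :=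
  μ (bt n 1) = sb n 0 ∧ μ (bt n 0) = sb n 1 ∧
    ∀ j : Fin (n + 1), j ≠ 0 → j ≠ 1 → μ (bt n j) = 0

/-- The algebra `D_r`: `[e₁, …, e_{i-1}, e_{i+1}, …, e_{n+1}] = e_i` for `1 ≤ i ≤ r`
(0-indexed: the tuple omitting `e j` maps to `e j` for `j < r` and to `0` otherwise). -/
def IsD (n r : ℕ) (μ : AlternatingMap ℂ (nV n) (nV n) (Fin n)) : Prop :=
  ∀ j : Fin (n + 1), ((j : ℕ) < r → μ (bt n j) = sb n j) ∧ (r ≤ (j : ℕ) → μ (bt n j) = 0)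

/-! Conjugating by the unimodular diagonal map `diag(1, t, t⁻¹, 1, …, 1)` keeps
`[e₂, …, e_{n+1}] = e₁` and multiplies `[e₁, e₃, …, e_{n+1}] = e₂` by `t²`, so the orbit of `C₁`
contains `B + t² (C₁ - B)` for every `t ≠ 0`; letting `t → 0` gives `B`. -/

open Filter Topology

lemma AlternatingMap.ext_bt {n : ℕ} {N : Type*} [AddCommGroup N] [Module ℂ N]
    {f g : AlternatingMap ℂ (nV n) N (Fin n)} (h : ∀ j, f (bt n j) = g (bt n j)) : f = g := by
  refine (Pi.basisFun ℂ (Fin (n + 1))).ext_alternating fun v hv => ?_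
  obtain ⟨j, hj⟩ : ∃ j, ∀ i, v i ≠ j := by
    by_contra! hsurj
    simpa using Fintype.card_le_of_surjective v hsurj
  choose w hw using fun i => Fin.exists_succAbove_eq (hj i)
  let σ : Equiv.Perm (Fin n) := Equiv.ofBijective w <| Finite.injective_iff_bijective.mp
    fun a b hab => hv (by rw [← hw a, ← hw b, hab])
  have hvσ : (fun i => Pi.basisFun ℂ (Fin (n + 1)) (v i)) = bt n j ∘ σ := by
    funext i; simp [bt, sb, σ, hw]
  rw [hvσ, f.map_perm, g.map_perm, h]

noncomputable def diagEquiv {n : ℕ} (u : Fin (n + 1) → ℂˣ) : nV n ≃ₗ[ℂ] nV n :=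
  LinearEquiv.piCongrRight fun k => LinearEquiv.smulOfUnit (u k)

lemma diagEquiv_sb {n : ℕ} (u : Fin (n + 1) → ℂˣ) (k : Fin (n + 1)) :
    diagEquiv u (sb n k) = (u k : ℂ) • sb n k := by
  ext i
  by_cases h : i = k <;> simp [diagEquiv, sb, LinearEquiv.smulOfUnit, Units.smul_def, h]

lemma diagEquiv_symm_sb {n : ℕ} (u : Fin (n + 1) → ℂˣ) (k : Fin (n + 1)) :
    (diagEquiv u).symm (sb n k) = ((u k)⁻¹ : ℂ) • sb n k := by
  rw [LinearEquiv.symm_apply_eq, map_smul, diagEquiv_sb, smul_smul,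
    inv_mul_cancel₀ (u k).ne_zero, one_smul]

lemma glAct_diagEquiv_bt {n : ℕ} (u : Fin (n + 1) → ℂˣ)
    (μ : AlternatingMap ℂ (nV n) (nV n) (Fin n)) (j : Fin (n + 1)) :
    glAct n (diagEquiv u) μ (bt n j) =
      (∏ i, (u (j.succAbove i) : ℂ))⁻¹ • diagEquiv u (μ (bt n j)) := by
  have hμ := μ.map_smul_univ (fun i => ((u (j.succAbove i) : ℂ))⁻¹) (bt n j)
  simp only [glAct, bt, diagEquiv_symm_sb] at hμ ⊢
  rw [hμ, map_smul, Finset.prod_inv_distrib]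

lemma glAct_eq_compAlternatingMap {n : ℕ} (g : nV n ≃ₗ[ℂ] nV n)
    (μ : AlternatingMap ℂ (nV n) (nV n) (Fin n)) :
    glAct n g μ = ⇑((g : nV n →ₗ[ℂ] nV n).compAlternatingMap (μ.compLinearMap g.symm)) :=
  rfl

lemma glAct_diagEquiv_of_isC1 {n : ℕ} (hn : 2 ≤ n) {μ ν : AlternatingMap ℂ (nV n) (nV n) (Fin n)}
    (hμ : IsC1 n μ) (hν : IsB n ν) (t : ℂˣ) :
    glAct n (diagEquiv (Pi.mulSingle 1 t * Pi.mulSingle 2 t⁻¹)) μ =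
      ⇑ν + ((t : ℂ) ^ 2) • (⇑μ - ⇑ν) := by
  set u : Fin (n + 1) → ℂˣ := Pi.mulSingle 1 t * Pi.mulSingle 2 t⁻¹
  obtain ⟨h21, h20, h10⟩ :
      (2 : Fin (n + 1)) ≠ 1 ∧ (2 : Fin (n + 1)) ≠ 0 ∧ (1 : Fin (n + 1)) ≠ 0 := by
    simp [Fin.ext_iff, Nat.mod_eq_of_lt (show 2 < n + 1 by omega),
      Nat.mod_eq_of_lt (show 1 < n + 1 by omega)]
  have hdet : ∏ k, u k = 1 := by simp [u, Finset.prod_mul_distrib]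
  have hprod (j : Fin (n + 1)) : (∏ i, (u (j.succAbove i) : ℂ))⁻¹ = u j := by
    rw [← Units.coe_prod,
      eq_inv_of_mul_eq_one_right ((Fin.prod_univ_succAbove u j).symm.trans hdet)]
    simp
  rw [glAct_eq_compAlternatingMap]
  refine congrArg DFunLike.coe
    (AlternatingMap.ext_bt (g := ν + ((t : ℂ) ^ 2) • (μ - ν)) fun j => ?_)
  rw [← glAct_eq_compAlternatingMap, glAct_diagEquiv_bt, hprod]
  simp only [AlternatingMap.add_apply, AlternatingMap.smul_apply, AlternatingMap.sub_apply]
  obtain rfl | hj0 := eq_or_ne j 0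
  · simp [hμ.1, hν.1, diagEquiv_sb, u, h10, h20]
  obtain rfl | hj1 := eq_or_ne j 1
  · simp [hμ.2.1, hν.2 1 h10, diagEquiv_sb, u, h21.symm, smul_smul, sq]
  · simp [hμ.2.2 j hj0 hj1, hν.2 j hj0]

/-- For every integer `n ≥ 2`, the `(n+1)`-dimensional `n`-ary Filippov
algebra `C₁` degenerates to `B`: the structure of `B` lies in the closure of the
`GL(V)`-orbit of the structure of `C₁`. -/
theorem C1_degenerates_to_B (n : ℕ) (hn : 2 ≤ n)
    (μ ν : AlternatingMap ℂ (nV n) (nV n) (Fin n)) (hμ : IsC1 n μ) (hν : IsB n ν) :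
    ⇑ν ∈ closure (glOrbit n ⇑μ) := by
  have hcont : Continuous fun t : ℂ => ⇑ν + t ^ 2 • (⇑μ - ⇑ν) := by fun_prop
  have hlim : Tendsto (fun t : ℂ => ⇑ν + t ^ 2 • (⇑μ - ⇑ν)) (𝓝[≠] 0) (𝓝 ⇑ν) := by
    simpa using (hcont.tendsto 0).mono_left nhdsWithin_le_nhds
  refine mem_closure_of_tendsto hlim (eventually_nhdsWithin_of_forall fun t ht => ?_)
  exact ⟨_, (glAct_diagEquiv_of_isC1 hn hμ hν (Units.mk0 t ht)).symm⟩
end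

section
/- For every integer n ≥ 2 and every α ∈ ℂ, the (n+1)-dimensional n-ary Filippov algebra D_{n+1} does not degenerate to C₂(α); that is, the structure of C₂(α) does not lie in the closure of the GL(V)-orbit of the structure of D_{n+1}. -/
open Function Submodule

/-! ### Auxiliary material: the trace form -/

/-- The trace form of an `n`-ary multiplication: the trace of the operator
`v ↦ f (update y i v)` computed in the standard basis. -/
noncomputable def trForm (n : ℕ) (f : (Fin n → nV n) → nV n)
    (y : Fin n → nV n) (i : Fin n) : ℂ :=
  ∑ m : Fin (n + 1), f (Function.update y i (sb n m)) m

lemma isClosed_trFormZero (n : ℕ) :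
    IsClosed {f : (Fin n → nV n) → nV n | ∀ y i, trForm n f y i = 0} := by
  have h : {f : (Fin n → nV n) → nV n | ∀ y i, trForm n f y i = 0}
      = ⋂ (y : Fin n → nV n) (i : Fin n), {f | trForm n f y i = 0} := by
    ext f; simp [Set.mem_iInter]
  rw [h]
  refine isClosed_iInter fun y => isClosed_iInter fun i => ?_
  refine isClosed_eq ?_ continuous_const
  exact continuous_finset_sum _ fun m _ =>
    (continuous_apply (m : Fin (n + 1))).comp
      (continuous_apply (Function.update y i (sb n m)))

lemma sum_diag_eq_trace {n : ℕ} (L : nV n →ₗ[ℂ] nV n) :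
    ∑ m : Fin (n + 1), L (sb n m) m = LinearMap.trace ℂ (nV n) L := by
  rw [LinearMap.trace_eq_matrix_trace ℂ (Pi.basisFun ℂ (Fin (n + 1))) L, Matrix.trace]
  simp [Matrix.diag, LinearMap.toMatrix_apply, sb]

/-- Expansion of an alternating map on the standard basis. -/
lemma alt_expand {n : ℕ} (μ : AlternatingMap ℂ (nV n) (nV n) (Fin n)) (z : Fin n → nV n) :
    μ z = ∑ r : Fin n → Fin (n + 1), (∏ t, z t (r t)) • μ (fun t => sb n (r t)) := by
  have hz : ∀ t, (∑ j : Fin (n + 1), z t j • sb n j) = z t := by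
    intro t
    have h1 : ∀ j, z t j • sb n j = Pi.single j (z t j) := by
      intro j
      simp [sb, ← Pi.single_smul]
    simp_rw [h1]
    exact Finset.univ_sum_single (z t)
  conv_lhs => rw [show z = fun t => ∑ j : Fin (n + 1), z t j • sb n j from
    funext fun t => (hz t).symm]
  rw [show μ (fun t => ∑ j : Fin (n + 1), z t j • sb n j)
      = μ.toMultilinearMap (fun t => ∑ j : Fin (n + 1), z t j • sb n j) from rfl,
    MultilinearMap.map_sum]
  refine Finset.sum_congr rfl fun r _ => ?_
  rw [MultilinearMap.map_smul_univ]
  rfl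

/-- For `D_{n+1}`, the value of `μ` on a tuple of basis vectors has vanishing
coordinate at every index appearing in the tuple. -/
lemma D_diag_zero {n : ℕ} {μ : AlternatingMap ℂ (nV n) (nV n) (Fin n)}
    (hμ : IsD n (n + 1) μ) (r : Fin n → Fin (n + 1)) (k : Fin n) :
    μ (fun t => sb n (r t)) (r k) = 0 := by
  by_cases hr : Function.Injective r
  · -- there is an omitted index j
    have hj : ∃ j : Fin (n + 1), ∀ t, r t ≠ j := by
      by_contra h
      push_neg at h
      have hs : Function.Surjective r := fun j => h j
      have := Fintype.card_le_of_surjective r hs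
      simp at this
    obtain ⟨j, hj⟩ := hj
    have hmem : ∀ t, ∃ s, j.succAbove s = r t := fun t => Fin.exists_succAbove_eq (hj t)
    classical
    let σ0 : Fin n → Fin n := fun t => (hmem t).choose
    have hσ0 : ∀ t, j.succAbove (σ0 t) = r t := fun t => (hmem t).choose_spec
    have hσinj : Function.Injective σ0 := by
      intro a b hab
      apply hr
      rw [← hσ0 a, ← hσ0 b, hab]
    let σ : Equiv.Perm (Fin n) :=
      Equiv.ofBijective σ0 (Finite.injective_iff_bijective.mp hσinj)
    have hcomp : (fun t => sb n (r t)) = (bt n j) ∘ σ := by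
      funext t
      simp only [Function.comp_apply, bt]
      rw [show σ t = σ0 t from rfl, hσ0]
    rw [hcomp, μ.map_perm (bt n j) σ, (hμ j).1 j.isLt]
    have : sb n j (r k) = 0 := by
      simp [sb, Pi.single_eq_of_ne (hj k)]
    simp [this]
  · obtain ⟨a, b, hab, hne⟩ : ∃ a b, r a = r b ∧ a ≠ b := by
      simp only [Function.Injective, not_forall] at hr
      obtain ⟨a, b, h1, h2⟩ := hr
      exact ⟨a, b, h1, h2⟩
    have : μ (fun t => sb n (r t)) = 0 :=
      μ.map_eq_zero_of_eq _ (by rw [hab]) hne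
    simp [this]

/-- The trace form vanishes identically for `D_{n+1}`. -/
lemma trForm_D_zero {n : ℕ} {μ : AlternatingMap ℂ (nV n) (nV n) (Fin n)}
    (hμ : IsD n (n + 1) μ) (y : Fin n → nV n) (i : Fin n) :
    trForm n ⇑μ y i = 0 := by
  unfold trForm
  refine Finset.sum_eq_zero fun m _ => ?_
  rw [alt_expand μ]
  rw [Finset.sum_apply]
  refine Finset.sum_eq_zero fun r _ => ?_
  rw [Pi.smul_apply, smul_eq_mul]
  by_cases hri : r i = m
  · have := D_diag_zero hμ r i
    rw [hri] at this
    rw [this, mul_zero]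
  · have hzero : Function.update y i (sb n m) i (r i) = 0 := by
      rw [Function.update_self]
      simp [sb, Pi.single_eq_of_ne hri]
    rw [Finset.prod_eq_zero (Finset.mem_univ i) hzero, zero_mul]

/-- The trace form is equivariant under the `GL(V)`-action. -/
lemma trForm_glAct {n : ℕ} (μ : AlternatingMap ℂ (nV n) (nV n) (Fin n))
    (g : nV n ≃ₗ[ℂ] nV n) (y : Fin n → nV n) (i : Fin n) :
    trForm n (glAct n g ⇑μ) y i = trForm n ⇑μ (fun k => g.symm (y k)) i := by
  classical
  set L : nV n →ₗ[ℂ] nV n :=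
    μ.toMultilinearMap.toLinearMap (fun k => g.symm (y k)) i with hL
  have h1 : trForm n ⇑μ (fun k => g.symm (y k)) i = LinearMap.trace ℂ (nV n) L := by
    rw [← sum_diag_eq_trace]
    rfl
  have h2 : trForm n (glAct n g ⇑μ) y i = LinearMap.trace ℂ (nV n) (g.conj L) := by
    rw [← sum_diag_eq_trace]
    refine Finset.sum_congr rfl fun m _ => ?_
    have harg : (fun k => g.symm (Function.update y i (sb n m) k))
        = Function.update (fun k => g.symm (y k)) i (g.symm (sb n m)) := by
      funext k
      by_cases hk : k = i
      · subst hk; simp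
      · simp [Function.update_of_ne hk]
    show g (μ fun k => g.symm (Function.update y i (sb n m) k)) m = _
    rw [harg]
    rw [LinearEquiv.conj_apply]
    rfl
  rw [h1, h2, LinearMap.trace_conj']

/-- For every integer `n ≥ 2` and every `α ∈ ℂ`, the algebra `D_{n+1}` does
not degenerate to `C₂(α)`. -/
theorem Dn1_not_degenerates_to_C2 (n : ℕ) (hn : 2 ≤ n) (α : ℂ)
    (μ ν : AlternatingMap ℂ (nV n) (nV n) (Fin n)) (hμ : IsD n (n + 1) μ) (hν : IsC2 n α ν) :
    ⇑ν ∉ closure (glOrbit n ⇑μ) := by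
  haveI : NeZero n := ⟨by omega⟩
  intro hmem
  -- The closed invariant set
  have hsub : closure (glOrbit n ⇑μ)
      ⊆ {f : (Fin n → nV n) → nV n | ∀ y i, trForm n f y i = 0} := by
    apply closure_minimal _ (isClosed_trFormZero n)
    rintro f ⟨g, rfl⟩ y i
    rw [trForm_glAct μ g y i]
    exact trForm_D_zero hμ _ i
  have hzero : trForm n ⇑ν (bt n 1) 0 = 0 := hsub hmem _ _
  -- now compute: trForm ν (bt n 1) 0 = 1
  have h01 : (0 : Fin (n + 1)) ≠ 1 := by
    intro h
    have := congrArg Fin.val h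
    simp [Fin.val_one', Nat.mod_eq_of_lt (by omega : 1 < n + 1)] at this
  have hsA0 : (1 : Fin (n + 1)).succAbove (0 : Fin n) = 0 := by
    rw [Fin.succAbove_of_castSucc_lt]
    · rfl
    · rw [Fin.lt_def]
      simp [Fin.val_one', Nat.mod_eq_of_lt (by omega : 1 < n + 1)]
  have hsA : ∀ k : Fin n, k ≠ 0 → (1 : Fin (n + 1)).succAbove k = k.succ := by
    intro k hk
    rw [Fin.succAbove_of_le_castSucc]
    rw [Fin.le_def]
    simp only [Fin.coe_castSucc, Fin.val_one', Nat.mod_eq_of_lt (by omega : 1 < n + 1)]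
    have : (k : ℕ) ≠ 0 := fun h => hk (Fin.ext h)
    omega
  have hone : trForm n ⇑ν (bt n 1) 0 = 1 := by
    unfold trForm
    rw [Finset.sum_eq_single (1 : Fin (n + 1))]
    · -- term at m = 1 : the tuple is bt n 0
      have htup : Function.update (bt n 1) 0 (sb n 1) = bt n 0 := by
        funext k
        by_cases hk : k = (0 : Fin n)
        · subst hk
          rw [Function.update_self]
          simp [bt, Fin.zero_succAbove]
        · rw [Function.update_of_ne hk]
          simp only [bt]
          rw [hsA k hk, Fin.zero_succAbove]
      rw [htup, hν.1]
      have hs01 : (Pi.single (0 : Fin (n + 1)) (1 : ℂ) : nV n) 1 = 0 := by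
        rw [Pi.single_eq_of_ne (Ne.symm h01)]
      simp [sb, hs01]
    · -- other terms vanish
      intro m _ hm1
      by_cases hm0 : m = 0
      · subst hm0
        have htup : Function.update (bt n 1) 0 (sb n 0) = bt n 1 := by
          have : bt n 1 0 = sb n 0 := by simp [bt, hsA0]
          rw [← this, Function.update_eq_self]
        rw [htup, hν.2.1]
        exact Pi.single_eq_of_ne h01 1
      · -- m ∉ {0,1} : repeated basis vector
        obtain ⟨k, hk'⟩ := Fin.exists_succAbove_eq hm1
        have hkne : k ≠ (0 : Fin n) := by
          intro h
          rw [h, hsA0] at hk'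
          exact hm0 hk'.symm
        have heq : Function.update (bt n 1) 0 (sb n m) 0
            = Function.update (bt n 1) 0 (sb n m) k := by
          rw [Function.update_self, Function.update_of_ne hkne]
          simp only [bt]
          rw [hk']
        have := ν.map_eq_zero_of_eq _ heq (Ne.symm hkne)
        rw [this]
        rfl
    · intro h
      exact absurd (Finset.mem_univ _) h
  rw [hzero] at hone
  exact zero_ne_one hone
end

section
/- For every integer n ≥ 2, the (n+1)-dimensional n-ary Filippov algebra D_{n+1} does not degenerate to C₃; that is, the structure of C₃ does not lie in the closure of the GL(V)-orbit of the structure of D_{n+1}. -/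
open Function Submodule

/-! The function `ρ ↦ ∑ⱼ ρ(eⱼ, y₁, …, y_m)ⱼ` is the trace of the left multiplication
`z ↦ ρ(z, y₁, …, y_m)`. It is continuous in `ρ`, and since `g • μ` has as left multiplications
the `g`-conjugates of the left multiplications of `μ` (with arguments `g⁻¹ yᵢ`), its values on the
orbit of `μ` are traces of left multiplications of `μ`. In `D_{n+1}` every left multiplication has
zero diagonal: the `j`-th coordinate of `[eⱼ, y₁, …, y_m]` is multilinear in the `yᵢ` and vanishes on
basis vectors, where the product is a multiple of the omitted basis vector. Hence the function
vanishes on the closure of the orbit of `D_{n+1}`, whereas for `C₃` and `y = (e₃, …, e_{n+1})` it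
equals `2`. -/

theorem LinearMap.trace_eq_sum_apply_single {R ι : Type*} [CommRing R] [Fintype ι] [DecidableEq ι]
    (f : (ι → R) →ₗ[R] ι → R) : LinearMap.trace R _ f = ∑ i, f (Pi.single i 1) i := by
  rw [LinearMap.trace_eq_matrix_trace R (Pi.basisFun R ι), LinearMap.toMatrix_eq_toMatrix']
  simp [Matrix.trace, LinearMap.toMatrix'_apply]

def leftMulTrace (m : ℕ) (y : Fin m → nV (m + 1))
    (ρ : (Fin (m + 1) → nV (m + 1)) → nV (m + 1)) : ℂ :=
  ∑ j, ρ (Fin.cons (sb (m + 1) j) y) j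

lemma continuous_leftMulTrace (m : ℕ) (y : Fin m → nV (m + 1)) :
    Continuous (leftMulTrace m y) := by
  unfold leftMulTrace
  fun_prop

lemma leftMulTrace_eq_trace {m : ℕ}
    (μ : MultilinearMap ℂ (fun _ : Fin (m + 1) => nV (m + 1)) (nV (m + 1)))
    (y : Fin m → nV (m + 1)) :
    leftMulTrace m y μ = LinearMap.trace ℂ _ (μ.toLinearMap (Fin.cons 0 y) 0) := by
  simp [LinearMap.trace_eq_sum_apply_single, leftMulTrace, Fin.update_cons_zero, sb]

lemma leftMulTrace_glAct {m : ℕ}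
    (μ : MultilinearMap ℂ (fun _ : Fin (m + 1) => nV (m + 1)) (nV (m + 1)))
    (g : nV (m + 1) ≃ₗ[ℂ] nV (m + 1)) (y : Fin m → nV (m + 1)) :
    leftMulTrace m y (glAct (m + 1) g μ) = leftMulTrace m (fun k => g.symm (y k)) μ := by
  rw [leftMulTrace_eq_trace, ← LinearMap.trace_conj' _ g, LinearMap.trace_eq_sum_apply_single]
  refine Finset.sum_congr rfl fun j _ => ?_
  simp only [glAct, LinearEquiv.conj_apply, LinearMap.comp_apply,
    LinearEquiv.coe_coe, MultilinearMap.toLinearMap_apply, Fin.update_cons_zero, sb]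
  exact congrArg (fun x => g (μ x) j) (Fin.comp_cons _ _ _)

lemma IsD.apply_single_comp_self_eq_zero {n : ℕ} {μ : AlternatingMap ℂ (nV n) (nV n) (Fin n)}
    (hμ : IsD n (n + 1) μ) (w : Fin n → Fin (n + 1)) (k : Fin n) :
    μ (fun i => sb n (w i)) (w k) = 0 := by
  by_cases hw : Injective w
  · obtain ⟨a, ha⟩ : ∃ a, a ∉ Set.range w := by
      by_contra! h
      simpa using Fintype.card_le_of_surjective w h
    choose σ hσ using fun i => Fin.exists_succAbove_eq fun h : w i = a => ha ⟨i, h⟩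
    have hσ_bij : Bijective σ :=
      Finite.injective_iff_bijective.mp fun x y h => hw (by rw [← hσ x, ← hσ y, h])
    have hwa : (fun i => sb n (w i)) = bt n a ∘ Equiv.ofBijective σ hσ_bij := by
      funext i
      simp [bt, hσ]
    have hka : w k ≠ a := fun h => ha ⟨k, h⟩
    rw [hwa, μ.map_perm, (hμ a).1 a.isLt]
    simp [sb, hka]
  · obtain ⟨x, z, hxz, hne⟩ := not_injective_iff.mp hw
    rw [μ.map_eq_zero_of_eq _ (congrArg (sb n) hxz) hne, Pi.zero_apply]

lemma IsD.apply_cons_single_self_eq_zero {m : ℕ}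
    {μ : AlternatingMap ℂ (nV (m + 1)) (nV (m + 1)) (Fin (m + 1))}
    (hμ : IsD (m + 1) (m + 1 + 1) μ) (j : Fin (m + 2)) (y : Fin m → nV (m + 1)) :
    μ (Fin.cons (sb (m + 1) j) y) j = 0 := by
  let T : MultilinearMap ℂ (fun _ : Fin m => nV (m + 1)) ℂ :=
    (LinearMap.proj j).compMultilinearMap (μ.toMultilinearMap.curryLeft (sb (m + 1) j))
  suffices T = 0 from DFunLike.congr_fun this y
  refine Module.Basis.ext_multilinear (fun _ => Pi.basisFun ℂ (Fin (m + 2))) fun v => ?_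
  have h := hμ.apply_single_comp_self_eq_zero (Fin.cons j v : Fin (m + 1) → Fin (m + 2)) 0
  rw [show (fun i => sb (m + 1) ((Fin.cons j v : Fin (m + 1) → Fin (m + 2)) i)) =
      Fin.cons (sb (m + 1) j) (fun i => sb (m + 1) (v i)) from
    Fin.comp_cons (sb (m + 1)) j v] at h
  simpa [T, sb] using h

lemma IsD.leftMulTrace_eq_zero_of_mem_closure {m : ℕ}
    {μ : AlternatingMap ℂ (nV (m + 1)) (nV (m + 1)) (Fin (m + 1))}
    (hμ : IsD (m + 1) (m + 1 + 1) μ) (y : Fin m → nV (m + 1))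
    {ρ : (Fin (m + 1) → nV (m + 1)) → nV (m + 1)} (hρ : ρ ∈ closure (glOrbit (m + 1) μ)) :
    leftMulTrace m y ρ = 0 := by
  refine closure_minimal ?_ (isClosed_eq (continuous_leftMulTrace m y) continuous_const) hρ
  rintro _ ⟨g, rfl⟩
  refine (leftMulTrace_glAct μ.toMultilinearMap g y).trans ?_
  exact Finset.sum_eq_zero fun j _ => hμ.apply_cons_single_self_eq_zero j _

lemma IsC3.leftMulTrace_eq_two {m : ℕ}
    {ν : AlternatingMap ℂ (nV (m + 1)) (nV (m + 1)) (Fin (m + 1))} (hν : IsC3 (m + 1) ν) :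
    leftMulTrace m (fun k => sb (m + 1) k.succ.succ) ν = 2 := by
  set y : Fin m → nV (m + 1) := fun k => sb (m + 1) k.succ.succ
  have h0 : Fin.cons (sb (m + 1) 0) y = bt (m + 1) 1 := by
    funext i
    cases i using Fin.cases <;> simp [y, bt]
  have h1 : Fin.cons (sb (m + 1) 1) y = bt (m + 1) 0 := by
    funext i
    cases i using Fin.cases <;> simp [y, bt]
  have h_rest (k : Fin m) : ν (Fin.cons (sb (m + 1) k.succ.succ) y) = 0 :=
    ν.map_eq_zero_of_eq _ (i := 0) (j := k.succ) (by simp [y]) (Fin.succ_ne_zero k).symm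
  simp only [leftMulTrace, Fin.sum_univ_succ, Fin.succ_zero_eq_one, h0, h1, hν.1, hν.2.1, h_rest]
  norm_num [sb]

/-- For every integer `n ≥ 2`, the algebra `D_{n+1}` does not degenerate
to `C₃`. -/
theorem Dn1_not_degenerates_to_C3 (n : ℕ) (hn : 2 ≤ n)
    (μ ν : AlternatingMap ℂ (nV n) (nV n) (Fin n)) (hμ : IsD n (n + 1) μ) (hν : IsC3 n ν) :
    ⇑ν ∉ closure (glOrbit n ⇑μ) := by
  obtain ⟨m, rfl⟩ : ∃ m, n = m + 1 := ⟨n - 1, by omega⟩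
  intro hν_mem
  have h := hμ.leftMulTrace_eq_zero_of_mem_closure (fun k => sb (m + 1) k.succ.succ) hν_mem
  rw [hν.leftMulTrace_eq_two] at h
  norm_num at h
end

section
/- For every integer n ≥ 2, the (n+1)-dimensional n-ary Filippov algebra C₃ does not degenerate to B; that is, the structure of B does not lie in the closure of the GL(V)-orbit of the structure of C₃. -/
open Function Submodule

/-! For a linear form `w` on `V` and an `n`-ary product `f`, `wedgeComp w f` is the `(n + 1)`-form
`w ∧ (w ∘ f)` (without normalising factor). When `f = μ` is alternating it equals `q(w) • det`,
where `q(w) = ∑ₖ (-1)ᵏ w(eₖ) w(μ(e₀, …, êₖ, …, eₙ))` is a quadratic form on `V*`: for `C₃` it is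
`w₀w₁ - w₁w₀ = 0`, for `B` it is `w₀² ≠ 0`. Since `g ∈ GL(V)` acts on `w ∧ (w ∘ f)` only by moving
`w` and the arguments, the vanishing of all these forms is a closed `GL(V)`-invariant condition. -/

section Wedge

variable {R M : Type*} [CommRing R] [AddCommGroup M] [Module R M] {n : ℕ}

def wedgeComp (w : M →ₗ[R] R) (f : (Fin n → M) → M) (x : Fin (n + 1) → M) : R :=
  ∑ k : Fin (n + 1), (-1) ^ (k : ℕ) * w (x k) * w (f (Fin.removeNth k x))

def wedgeCompForm (w : M →ₗ[R] R) (μ : M [⋀^Fin n]→ₗ[R] M) : M [⋀^Fin (n + 1)]→ₗ[R] R :=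
  AlternatingMap.alternatizeUncurryFin (w.smulRight (w.compAlternatingMap μ))

theorem wedgeCompForm_apply (w : M →ₗ[R] R) (μ : M [⋀^Fin n]→ₗ[R] M) (x : Fin (n + 1) → M) :
    wedgeCompForm w μ x = wedgeComp w μ x := by
  simp [wedgeCompForm, wedgeComp, AlternatingMap.alternatizeUncurryFin_apply, mul_assoc]

theorem wedgeComp_eq_zero_of_basis (b : Module.Basis (Fin (n + 1)) R M) (w : M →ₗ[R] R)
    (μ : M [⋀^Fin n]→ₗ[R] M) (hb : wedgeComp w μ b = 0) (x : Fin (n + 1) → M) :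
    wedgeComp w μ x = 0 := by
  rw [← wedgeCompForm_apply, (wedgeCompForm w μ).eq_smul_basis_det b, wedgeCompForm_apply, hb,
    zero_smul, AlternatingMap.zero_apply]

end Wedge

theorem wedgeComp_glAct {n : ℕ} (w : nV n →ₗ[ℂ] ℂ) (g : nV n ≃ₗ[ℂ] nV n)
    (f : (Fin n → nV n) → nV n) (x : Fin (n + 1) → nV n) :
    wedgeComp w (glAct n g f) x = wedgeComp (w ∘ₗ g.toLinearMap) f (g.symm ∘ x) := by
  simp only [wedgeComp, glAct, LinearMap.comp_apply, LinearEquiv.coe_coe, Function.comp_apply,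
    LinearEquiv.apply_symm_apply]
  rfl

theorem continuous_wedgeComp {n : ℕ} (w : nV n →ₗ[ℂ] ℂ) (x : Fin (n + 1) → nV n) :
    Continuous fun f : (Fin n → nV n) → nV n => wedgeComp w f x := by
  have hw := w.continuous_of_finiteDimensional
  unfold wedgeComp
  fun_prop

def WedgeCompVanishes {n : ℕ} (f : (Fin n → nV n) → nV n) : Prop :=
  ∀ (w : nV n →ₗ[ℂ] ℂ) (x : Fin (n + 1) → nV n), wedgeComp w f x = 0

theorem isClosed_setOf_wedgeCompVanishes (n : ℕ) :
    IsClosed {φ : (Fin n → nV n) → nV n | WedgeCompVanishes φ} := by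
  simp only [WedgeCompVanishes, Set.ofPred_forall]
  exact isClosed_iInter fun w => isClosed_iInter fun x =>
    isClosed_eq (continuous_wedgeComp w x) continuous_const

theorem WedgeCompVanishes.glAct {n : ℕ} {f : (Fin n → nV n) → nV n} (hf : WedgeCompVanishes f)
    (g : nV n ≃ₗ[ℂ] nV n) : WedgeCompVanishes (glAct n g f) := fun w x => by
  rw [wedgeComp_glAct]
  exact hf _ _

theorem closure_glOrbit_subset {n : ℕ} {f : (Fin n → nV n) → nV n} (hf : WedgeCompVanishes f) :
    closure (glOrbit n f) ⊆ {φ | WedgeCompVanishes φ} := by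
  refine closure_minimal ?_ (isClosed_setOf_wedgeCompVanishes n)
  rintro _ ⟨g, rfl⟩
  exact hf.glAct g

theorem removeNth_basisFun {n : ℕ} (k : Fin (n + 1)) :
    Fin.removeNth k (Pi.basisFun ℂ (Fin (n + 1))) = bt n k := by
  ext i
  simp [Fin.removeNth, bt, sb]

theorem wedgeCompVanishes_of_isC3 {n : ℕ} (hn : 1 ≤ n) {μ : AlternatingMap ℂ (nV n) (nV n) (Fin n)}
    (hμ : IsC3 n μ) : WedgeCompVanishes μ := by
  obtain ⟨m, rfl⟩ : ∃ m, n = m + 1 := ⟨n - 1, by omega⟩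
  intro w
  apply wedgeComp_eq_zero_of_basis (Pi.basisFun ℂ _)
  simp only [wedgeComp, Fin.sum_univ_succ (n := m + 1), Fin.sum_univ_succ (n := m),
    removeNth_basisFun]
  have hrest (i : Fin m) : μ (bt (m + 1) i.succ.succ) = 0 :=
    hμ.2.2 _ (Fin.succ_ne_zero _) (by simp [Fin.ext_iff])
  simp [Fin.succ_zero_eq_one, hμ.1, hμ.2.1, hrest, sb, mul_comm]

theorem not_wedgeCompVanishes_of_isB {n : ℕ} {ν : AlternatingMap ℂ (nV n) (nV n) (Fin n)}
    (hν : IsB n ν) : ¬ WedgeCompVanishes ν := by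
  intro h
  have := h (LinearMap.proj 0) (Pi.basisFun ℂ _)
  rw [wedgeComp, Fintype.sum_eq_single 0] at this
  · simp [removeNth_basisFun, hν.1, sb] at this
  · intro k hk
    simp [hk]

/-- For every integer `n ≥ 2`, the algebra `C₃` does not degenerate to `B`. -/
theorem C3_not_degenerates_to_B (n : ℕ) (hn : 2 ≤ n)
    (μ ν : AlternatingMap ℂ (nV n) (nV n) (Fin n)) (hμ : IsC3 n μ) (hν : IsB n ν) :
    ⇑ν ∉ closure (glOrbit n ⇑μ) := fun h =>
  not_wedgeCompVanishes_of_isB hν <|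
    closure_glOrbit_subset (wedgeCompVanishes_of_isC3 (by omega) hμ) h
end

section
/- For every integer n ≥ 2, the algebra D_{n+1} satisfies: tr(R_X) = 0 for every fundamental object X, while there exists a fundamental object X with tr(R_X ∘ R_X) ≠ 0. (Hence the (1,1)-invariant of D_{n+1} equals 0.) -/
open Function Submodule

/-! For `D_{n+1}`, a product of `n` basis vectors is `± e_a` for the missing index `a` (or zero),
so its coordinate along any of its own arguments vanishes. Since `tr R_X = ∑ⱼ μ(e_j, X)_j` is
multilinear in `X` and vanishes on tuples of basis vectors, it vanishes identically.
For `X = (e₃, …, e_{n+1})` the operator `R_X` swaps `e₁` and `e₂` and kills the other basis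
vectors, so `tr R_X² = 2`. -/

lemma LinearMap.trace_pi_eq_sum_apply_single {R ι : Type*} [CommSemiring R] [Fintype ι]
    [DecidableEq ι] (f : (ι → R) →ₗ[R] ι → R) :
    LinearMap.trace R (ι → R) f = ∑ i, f (Pi.single i 1) i := by
  rw [LinearMap.trace_eq_matrix_trace R (Pi.basisFun R ι), LinearMap.toMatrix_eq_toMatrix',
    Matrix.trace]
  simp only [Matrix.diag_apply, LinearMap.toMatrix'_apply]

lemma Fin.exists_succAbove_comp_perm_of_injective {n : ℕ} {w : Fin n → Fin (n + 1)}
    (hw : Injective w) : ∃ (a : Fin (n + 1)) (σ : Equiv.Perm (Fin n)), w = a.succAbove ∘ σ := by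
  obtain ⟨a, ha⟩ : ∃ a, ∀ k, w k ≠ a := by
    by_contra! h
    simpa using Fintype.card_le_of_surjective w h
  choose σ hσ using fun k => Fin.exists_succAbove_eq (ha k)
  have hσ_inj : Injective σ := fun k l hkl => hw <| by rw [← hσ k, ← hσ l, hkl]
  exact ⟨a, Equiv.ofBijective σ (Finite.injective_iff_bijective.mp hσ_inj),
    funext fun k => (hσ k).symm⟩

noncomputable def rightMul {R M N : Type*} [CommSemiring R] [AddCommMonoid M] [Module R M]
    [AddCommMonoid N] [Module R N] {m : ℕ} (μ : M [⋀^Fin (m + 1)]→ₗ[R] N) (X : Fin m → M) :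
    M →ₗ[R] N :=
  μ.toMultilinearMap.toLinearMap (Fin.cons 0 X) 0

@[simp]
lemma rightMul_apply {R M N : Type*} [CommSemiring R] [AddCommMonoid M] [Module R M]
    [AddCommMonoid N] [Module R N] {m : ℕ} (μ : M [⋀^Fin (m + 1)]→ₗ[R] N) (X : Fin m → M)
    (z : M) : rightMul μ X z = μ (Fin.cons z X) := by
  simp [rightMul, MultilinearMap.toLinearMap, Fin.update_cons_zero]

namespace IsD

section

variable {n r : ℕ} {μ : AlternatingMap ℂ (nV n) (nV n) (Fin n)}

lemma apply_bt_apply_of_ne (hμ : IsD n r μ) {a i : Fin (n + 1)} (hi : i ≠ a) :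
    μ (bt n a) i = 0 := by
  by_cases ha : (a : ℕ) < r
  · simp [(hμ a).1 ha, sb, Pi.single_eq_of_ne hi]
  · simp [(hμ a).2 (not_lt.mp ha)]

lemma apply_sb_comp_apply_self (hμ : IsD n r μ) (w : Fin n → Fin (n + 1)) (k : Fin n) :
    μ (sb n ∘ w) (w k) = 0 := by
  by_cases hw : Injective w
  · obtain ⟨a, σ, rfl⟩ := Fin.exists_succAbove_comp_perm_of_injective hw
    have hperm : sb n ∘ a.succAbove ∘ σ = bt n a ∘ σ := rfl
    rw [hperm, μ.map_perm, Units.smul_def, Pi.smul_apply, comp_apply,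
      hμ.apply_bt_apply_of_ne (Fin.succAbove_ne a (σ k)), smul_zero]
  · have : ¬Injective (sb n ∘ w) := fun h => hw h.of_comp
    simp [μ.map_eq_zero_of_not_injective _ this]

end

section

variable {m r : ℕ} {μ : AlternatingMap ℂ (nV (m + 1)) (nV (m + 1)) (Fin (m + 1))}

lemma trace_rightMul_eq_zero (hμ : IsD (m + 1) r μ) (X : Fin m → nV (m + 1)) :
    LinearMap.trace ℂ (nV (m + 1)) (rightMul μ X) = 0 := by
  let F : MultilinearMap ℂ (fun _ : Fin m => nV (m + 1)) ℂ :=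
    ∑ j, (LinearMap.proj j).compMultilinearMap (μ.curryLeft (sb (m + 1) j)).toMultilinearMap
  have hF : F = 0 := Module.Basis.ext_multilinear (fun _ => Pi.basisFun ℂ _) fun v => by
    simp only [F, sum_apply, LinearMap.compMultilinearMap_apply]
    refine Finset.sum_eq_zero fun j _ => ?_
    have h := hμ.apply_sb_comp_apply_self (Fin.cons j v) 0
    rw [Fin.comp_cons, Fin.cons_zero] at h
    simpa [sb, comp_def] using h
  calc LinearMap.trace ℂ (nV (m + 1)) (rightMul μ X) = F X := by
        simp [LinearMap.trace_pi_eq_sum_apply_single, F, sb]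
    _ = 0 := by rw [hF]; rfl

lemma trace_rightMul_comp_self (hμ : IsD (m + 1) r μ) (hr : 2 ≤ r) :
    LinearMap.trace ℂ (nV (m + 1))
      (rightMul μ (fun i => sb (m + 1) i.succ.succ) ∘ₗ
        rightMul μ (fun i => sb (m + 1) i.succ.succ)) = 2 := by
  set R := rightMul μ (fun i => sb (m + 1) i.succ.succ)
  have hR₀ : R (sb (m + 1) 0) = sb (m + 1) 1 := by
    have hbt : Fin.cons (sb (m + 1) 0) (fun i => sb (m + 1) i.succ.succ) = bt (m + 1) 1 := by
      refine funext (Fin.cases ?_ fun k => ?_) <;> simp [bt, Fin.one_succAbove_succ]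
    rw [rightMul_apply, hbt, (hμ 1).1 (by simp; omega)]
  have hR₁ : R (sb (m + 1) 1) = sb (m + 1) 0 := by
    have hbt : Fin.cons (sb (m + 1) 1) (fun i => sb (m + 1) i.succ.succ) = bt (m + 1) 0 := by
      refine funext (Fin.cases ?_ fun k => ?_) <;> simp [bt]
    rw [rightMul_apply, hbt, (hμ 0).1 (by simp; omega)]
  have hR : ∀ i : Fin m, R (sb (m + 1) i.succ.succ) = 0 := fun i =>
    μ.map_eq_zero_of_eq _ (i := 0) (j := i.succ) (by simp) (Fin.succ_ne_zero i).symm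
  have hsb : ∀ i, Pi.single i 1 = sb (m + 1) i := fun _ => rfl
  rw [LinearMap.trace_pi_eq_sum_apply_single, Fin.sum_univ_succ, Fin.sum_univ_succ]
  simp only [hsb, LinearMap.comp_apply, Fin.succ_zero_eq_one, hR₀, hR₁, hR, map_zero]
  simp [sb, one_add_one_eq_two]

end

end IsD

theorem Dn1_trace_invariant_general (m : ℕ)
    (μ : AlternatingMap ℂ (nV (m + 1)) (nV (m + 1)) (Fin (m + 1)))
    (hμ : IsD (m + 1) (m + 2) μ) :
    (∀ (X : Fin m → nV (m + 1)) (RX : nV (m + 1) →ₗ[ℂ] nV (m + 1)),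
        (∀ z : nV (m + 1), RX z = μ (Fin.cons z X)) →
        LinearMap.trace ℂ (nV (m + 1)) RX = 0) ∧
      ∃ (X : Fin m → nV (m + 1)) (RX : nV (m + 1) →ₗ[ℂ] nV (m + 1)),
        (∀ z : nV (m + 1), RX z = μ (Fin.cons z X)) ∧
        LinearMap.trace ℂ (nV (m + 1)) (RX ∘ₗ RX) ≠ 0 := by
  refine ⟨fun X RX hRX => ?_, _, _, rightMul_apply μ (fun i => sb (m + 1) i.succ.succ), ?_⟩
  · rw [show RX = rightMul μ X from LinearMap.ext fun z => by rw [hRX, rightMul_apply]]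
    exact hμ.trace_rightMul_eq_zero X
  · rw [hμ.trace_rightMul_comp_self (by omega)]
    exact two_ne_zero

/-- For every integer `n = m + 1 ≥ 2`, the algebra `D_{n+1}` satisfies:
`tr(R_X) = 0` for every fundamental object `X`, while there is a fundamental object `X`
with `tr(R_X ∘ R_X) ≠ 0`.  (Hence the `(1,1)`-invariant of `D_{n+1}` equals `0`.) -/
theorem Dn1_trace_invariant (m : ℕ) (hm : 1 ≤ m)
    (μ : AlternatingMap ℂ (nV (m + 1)) (nV (m + 1)) (Fin (m + 1)))
    (hμ : IsD (m + 1) (m + 2) μ) :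
    (∀ (X : Fin m → nV (m + 1)) (RX : nV (m + 1) →ₗ[ℂ] nV (m + 1)),
        (∀ z : nV (m + 1), RX z = μ (Fin.cons z X)) →
        LinearMap.trace ℂ (nV (m + 1)) RX = 0) ∧
      ∃ (X : Fin m → nV (m + 1)) (RX : nV (m + 1) →ₗ[ℂ] nV (m + 1)),
        (∀ z : nV (m + 1), RX z = μ (Fin.cons z X)) ∧
        LinearMap.trace ℂ (nV (m + 1)) (RX ∘ₗ RX) ≠ 0 :=
  Dn1_trace_invariant_general m μ hμ
end

section
/- Let μ and λ be n-ary algebra structures on V with λ in the closure of the GL(V)-orbit of μ, and fix positive integers i, j. Suppose c ∈ ℂ is the unique constant such that tr(R_X^i) · tr(R_Y^j) = c · tr(R_X^i ∘ R_Y^j) for all fundamental objects X, Y of μ, and c' ∈ ℂ is the unique constant with the analogous property for λ. Then c = c'. (Degeneration preserves (i,j)-invariants.) -/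
open Function Submodule

/-- `d` satisfies the defining identity of the `(i,j)`-trace-invariant for the `(m+1)`-ary
structure `μ`: for all fundamental objects `X, Y` (with right multiplications `R_X, R_Y`),
`tr(R_X^i) · tr(R_Y^j) = d · tr(R_X^i ∘ R_Y^j)`. -/
def TraceInvConst (m i j : ℕ)
    (μ : MultilinearMap ℂ (fun _ : Fin (m + 1) => nV (m + 1)) (nV (m + 1))) (d : ℂ) : Prop :=
  ∀ (X Y : Fin m → nV (m + 1)) (RX RY : nV (m + 1) →ₗ[ℂ] nV (m + 1)),
    (∀ z : nV (m + 1), RX z = μ (Fin.cons z X)) →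
    (∀ z : nV (m + 1), RY z = μ (Fin.cons z Y)) →
    LinearMap.trace ℂ (nV (m + 1)) (RX ^ i) * LinearMap.trace ℂ (nV (m + 1)) (RY ^ j) =
      d * LinearMap.trace ℂ (nV (m + 1)) ((RX ^ i) ∘ₗ (RY ^ j))

/-
The identity `tr(R_X^i) tr(R_Y^j) = c · tr(R_X^i R_Y^j)` is invariant under `GL(V)`, since
the right multiplications of `g • μ` are conjugates by `g` of those of `μ`. In terms of the
structure constants it is a family of polynomial equations, so the set of multiplications
satisfying it is closed. Hence `c` also works for every degeneration `ν` of `μ`, and by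
uniqueness it is `c'`.
-/

theorem LinearEquiv.conj_pow {R M N : Type*} [CommSemiring R] [AddCommMonoid M] [Module R M]
    [AddCommMonoid N] [Module R N] (e : M ≃ₗ[R] N) (f : Module.End R M) (k : ℕ) :
    e.conj (f ^ k) = e.conj f ^ k :=
  map_pow e.conjRingEquiv f k

section RightMulMatrix

variable {R ι : Type*} [CommSemiring R] [Fintype ι] [DecidableEq ι] {m : ℕ}

/-- Defined for arbitrary `f`, not only multilinear ones, so that it depends continuously on `f`
on the whole space containing the orbit closure. -/
def rightMulMatrix (f : (Fin (m + 1) → ι → R) → ι → R) (X : Fin m → ι → R) : Matrix ι ι R :=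
  Matrix.of fun k l => f (Fin.cons (Pi.single l 1) X) k

theorem eq_toLin'_rightMulMatrix {f : (Fin (m + 1) → ι → R) → ι → R} {X : Fin m → ι → R}
    {L : (ι → R) →ₗ[R] ι → R} (hL : ∀ z, L z = f (Fin.cons z X)) :
    L = Matrix.toLin' (rightMulMatrix f X) := by
  rw [← Matrix.toLin'_toMatrix' L]
  congr 1
  ext k l
  rw [LinearMap.toMatrix'_apply, hL]
  rfl

theorem toLin'_rightMulMatrix_apply
    (μ : MultilinearMap R (fun _ : Fin (m + 1) => ι → R) (ι → R)) (X : Fin m → ι → R)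
    (z : ι → R) : Matrix.toLin' (rightMulMatrix μ X) z = μ (Fin.cons z X) := by
  have hR (z' : ι → R) : μ.toLinearMap (Fin.cons 0 X) 0 z' = μ (Fin.cons z' X) := by
    simp only [MultilinearMap.toLinearMap_apply, Fin.update_cons_zero]
  rw [← eq_toLin'_rightMulMatrix hR, hR]

end RightMulMatrix

def MatrixTraceInv {R ι : Type*} [CommSemiring R] [Fintype ι] [DecidableEq ι] (m i j : ℕ)
    (f : (Fin (m + 1) → ι → R) → ι → R) (d : R) : Prop :=
  ∀ X Y : Fin m → ι → R,
    ((rightMulMatrix f X) ^ i).trace * ((rightMulMatrix f Y) ^ j).trace =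
      d * ((rightMulMatrix f X) ^ i * (rightMulMatrix f Y) ^ j).trace

theorem isClosed_setOf_matrixTraceInv {R ι : Type*} [CommSemiring R] [TopologicalSpace R]
    [IsTopologicalSemiring R] [T2Space R] [Fintype ι] [DecidableEq ι] (m i j : ℕ) (d : R) :
    IsClosed {f : (Fin (m + 1) → ι → R) → ι → R | MatrixTraceInv m i j f d} := by
  have hcont (X : Fin m → ι → R) :
      Continuous fun f : (Fin (m + 1) → ι → R) → ι → R => rightMulMatrix f X :=
    continuous_pi fun k => continuous_pi fun l =>
      (continuous_apply k).comp (continuous_apply _)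
  simp only [MatrixTraceInv, Set.ofPred_forall]
  refine isClosed_iInter fun X => isClosed_iInter fun Y => isClosed_eq ?_ ?_
  · exact (((hcont X).pow i).matrix_trace).mul (((hcont Y).pow j).matrix_trace)
  · exact continuous_const.mul ((((hcont X).pow i).mul ((hcont Y).pow j)).matrix_trace)

theorem traceInvConst_iff_matrixTraceInv (m i j : ℕ)
    (μ : MultilinearMap ℂ (fun _ : Fin (m + 1) => nV (m + 1)) (nV (m + 1))) (d : ℂ) :
    TraceInvConst m i j μ d ↔ MatrixTraceInv m i j μ d := by
  simp only [TraceInvConst, MatrixTraceInv]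
  constructor
  · intro h X Y
    simpa only [← Matrix.toLin'_pow, ← Matrix.toLin'_mul, Matrix.trace_toLin'_eq] using
      h X Y _ _ (toLin'_rightMulMatrix_apply μ X) (toLin'_rightMulMatrix_apply μ Y)
  · intro h X Y RX RY hX hY
    rw [eq_toLin'_rightMulMatrix hX, eq_toLin'_rightMulMatrix hY]
    simpa only [← Matrix.toLin'_pow, ← Matrix.toLin'_mul, Matrix.trace_toLin'_eq] using h X Y

def glActMultilinear (n : ℕ) (g : nV n ≃ₗ[ℂ] nV n)
    (μ : MultilinearMap ℂ (fun _ : Fin n => nV n) (nV n)) :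
    MultilinearMap ℂ (fun _ : Fin n => nV n) (nV n) :=
  (g : nV n →ₗ[ℂ] nV n).compMultilinearMap (μ.compLinearMap fun _ => (g.symm : nV n →ₗ[ℂ] nV n))

theorem coe_glActMultilinear (n : ℕ) (g : nV n ≃ₗ[ℂ] nV n)
    (μ : MultilinearMap ℂ (fun _ : Fin n => nV n) (nV n)) :
    ⇑(glActMultilinear n g μ) = glAct n g μ :=
  rfl

theorem traceInvConst_glActMultilinear {m i j : ℕ}
    {μ : MultilinearMap ℂ (fun _ : Fin (m + 1) => nV (m + 1)) (nV (m + 1))} {d : ℂ}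
    (h : TraceInvConst m i j μ d) (g : nV (m + 1) ≃ₗ[ℂ] nV (m + 1)) :
    TraceInvConst m i j (glActMultilinear (m + 1) g μ) d := by
  have conj_symm (X : Fin m → nV (m + 1)) (RX : nV (m + 1) →ₗ[ℂ] nV (m + 1))
      (hX : ∀ z, RX z = glActMultilinear (m + 1) g μ (Fin.cons z X)) (z : nV (m + 1)) :
      g.symm.conj RX z = μ (Fin.cons z (g.symm ∘ X)) := by
    rw [LinearEquiv.conj_apply_apply, hX, coe_glActMultilinear, glAct,
      LinearEquiv.symm_apply_apply]
    congr 1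
    ext1 k
    cases k using Fin.cases <;> simp
  intro X Y RX RY hX hY
  have := h _ _ _ _ (conj_symm X RX hX) (conj_symm Y RY hY)
  rwa [← LinearEquiv.conj_pow, ← LinearEquiv.conj_pow, ← LinearEquiv.conj_comp,
    LinearMap.trace_conj', LinearMap.trace_conj', LinearMap.trace_conj'] at this

theorem glOrbit_subset_setOf_matrixTraceInv {m i j : ℕ}
    {μ : MultilinearMap ℂ (fun _ : Fin (m + 1) => nV (m + 1)) (nV (m + 1))} {d : ℂ}
    (h : TraceInvConst m i j μ d) :
    glOrbit (m + 1) μ ⊆ {f | MatrixTraceInv m i j f d} := by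
  rintro _ ⟨g, rfl⟩
  rw [← coe_glActMultilinear]
  exact (traceInvConst_iff_matrixTraceInv m i j _ d).1 (traceInvConst_glActMultilinear h g)

theorem degeneration_preserves_trace_invariants_general (m : ℕ)
    (μ ν : MultilinearMap ℂ (fun _ : Fin (m + 1) => nV (m + 1)) (nV (m + 1)))
    (hdeg : ⇑ν ∈ closure (glOrbit (m + 1) ⇑μ))
    (i j : ℕ) (c c' : ℂ)
    (hc : TraceInvConst m i j μ c)
    (hc'u : ∀ d : ℂ, TraceInvConst m i j ν d → d = c') :
    c = c' := by
  have hclosure : closure (glOrbit (m + 1) ⇑μ) ⊆ {f | MatrixTraceInv m i j f c} :=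
    closure_minimal (glOrbit_subset_setOf_matrixTraceInv hc)
      (isClosed_setOf_matrixTraceInv m i j c)
  exact hc'u c ((traceInvConst_iff_matrixTraceInv m i j ν c).2 (hclosure hdeg))

/-- Degeneration preserves `(i,j)`-invariants: if `λ = ν` lies in the
closure of the `GL(V)`-orbit of `μ`, `i, j` are positive, `c` is the unique constant with
`tr(R_X^i) tr(R_Y^j) = c · tr(R_X^i ∘ R_Y^j)` for all fundamental objects of `μ`, and `c'`
is the unique such constant for `ν`, then `c = c'`. -/
theorem degeneration_preserves_trace_invariants (m : ℕ) (hm : 1 ≤ m)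
    (μ ν : MultilinearMap ℂ (fun _ : Fin (m + 1) => nV (m + 1)) (nV (m + 1)))
    (hdeg : ⇑ν ∈ closure (glOrbit (m + 1) ⇑μ))
    (i j : ℕ) (hi : 0 < i) (hj : 0 < j) (c c' : ℂ)
    (hc : TraceInvConst m i j μ c) (hcu : ∀ d : ℂ, TraceInvConst m i j μ d → d = c)
    (hc' : TraceInvConst m i j ν c') (hc'u : ∀ d : ℂ, TraceInvConst m i j ν d → d = c') :
    c = c' :=
  degeneration_preserves_trace_invariants_general m μ ν hdeg i j c c' hc hc'u
end

section
/- Let μ and λ be n-ary algebra structures on V with λ in the closure of the GL(V)-orbit of μ. Then for every (α) = (α₀, α₁, …, αₙ) ∈ ℂ^{n+1}, the dimension of the space Der_{(α)}(μ) of (α)-derivations of μ is at most the dimension of Der_{(α)}(λ). -/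
open Function Submodule

/-! `Der_{(α)}(σ)` is the kernel of the linear map `D ↦ α₀ D ∘ σ - Σᵢ αᵢ σ(…, D xᵢ, …)`, which is
`GL(V)`-equivariant (`Der_{(α)}(g • σ) = g Der_{(α)}(σ) g⁻¹`), so its dimension is constant on
the orbit of `μ`. This map also depends continuously on `σ`, and the rank of a continuous family
of linear maps into a finite-dimensional space is lower semicontinuous (linearly independent
images stay independent nearby). Hence the dimension of the kernel can only go up in the limit. -/

open Module LinearMap

section RankSemicontinuity

variable {X 𝕜 E F : Type*} [TopologicalSpace X] [NontriviallyNormedField 𝕜] [CompleteSpace 𝕜]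
  [AddCommGroup E] [Module 𝕜 E] [NormedAddCommGroup F] [NormedSpace 𝕜 F] [FiniteDimensional 𝕜 F]
  {f : X → E →ₗ[𝕜] F}

theorem isOpen_setOf_le_finrank_range (hf : ∀ v, Continuous fun x => f x v) (r : ℕ) :
    IsOpen {x | r ≤ finrank 𝕜 (range (f x))} := by
  have hrank : ∀ x, r ≤ finrank 𝕜 (range (f x)) ↔
      ∃ s : Finset E, s.card = r ∧ LinearIndependent 𝕜 fun v : (s : Set E) => f x v := by
    intro x
    rw [← LinearMap.le_rank_iff_exists_linearIndependent_finset, LinearMap.rank,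
      ← finrank_eq_rank, Nat.cast_le]
  simp only [hrank, Set.ofPred_exists, Set.ofPred_and]
  exact isOpen_iUnion fun s => isOpen_const.inter <|
    isOpen_setOfPred_linearIndependent.preimage
      (continuous_pi fun v : (s : Set E) => hf v : Continuous fun x (v : (s : Set E)) => f x v)

theorem upperSemicontinuous_finrank_ker [FiniteDimensional 𝕜 E]
    (hf : ∀ v, Continuous fun x => f x v) :
    UpperSemicontinuous fun x => finrank 𝕜 (ker (f x)) := by
  intro x r (hr : finrank 𝕜 (ker (f x)) < r)
  have hx := finrank_range_add_finrank_ker (f x)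
  filter_upwards [(isOpen_setOf_le_finrank_range hf (finrank 𝕜 E + 1 - r)).mem_nhds
    (by simp only [Set.mem_ofPred_eq]; omega)] with y hy
  have hy' := finrank_range_add_finrank_ker (f y)
  omega

end RankSemicontinuity

namespace MultilinearMap

section Derivations

variable {R M : Type*} [CommRing R] [AddCommGroup M] [Module R M] {n : ℕ}

theorem compLinearMap_update_id_apply {ι N : Type*} [DecidableEq ι] [AddCommGroup N]
    [Module R N] (σ : MultilinearMap R (fun _ : ι => M) N) (i : ι) (D : M →ₗ[R] M) (x : ι → M) :
    σ.compLinearMap (update (fun _ => LinearMap.id) i D) x = σ (update x i (D (x i))) := by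
  rw [compLinearMap_apply]
  congr 1
  ext j
  rcases eq_or_ne j i with rfl | hj <;> simp [*]

noncomputable def derivationDefect (α : Fin (n + 1) → R)
    (σ : MultilinearMap R (fun _ : Fin n => M) M) :
    (M →ₗ[R] M) →ₗ[R] MultilinearMap R (fun _ : Fin n => M) M where
  toFun D := α 0 • D.compMultilinearMap σ -
    ∑ i, α i.succ • σ.compLinearMap (update (fun _ => LinearMap.id) i D)
  map_add' D D' := by
    ext x
    simp only [_root_.add_apply, _root_.sub_apply, _root_.smul_apply,
      _root_.sum_apply, LinearMap.compMultilinearMap_apply, compLinearMap_update_id_apply,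
      LinearMap.add_apply, MultilinearMap.map_update_add, smul_add, Finset.sum_add_distrib]
    abel
  map_smul' c D := by
    ext x
    simp only [_root_.smul_apply, _root_.sub_apply, _root_.sum_apply,
      LinearMap.compMultilinearMap_apply, compLinearMap_update_id_apply, LinearMap.smul_apply,
      MultilinearMap.map_update_smul, RingHom.id_apply, smul_sub, Finset.smul_sum, smul_comm c]

theorem derivationDefect_apply (α : Fin (n + 1) → R) (σ : MultilinearMap R (fun _ : Fin n => M) M)
    (D : M →ₗ[R] M) (x : Fin n → M) :
    derivationDefect α σ D x = α 0 • D (σ x) - ∑ i, α i.succ • σ (update x i (D (x i))) := by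
  simp only [derivationDefect, LinearMap.coe_mk, AddHom.coe_mk, _root_.sub_apply,
    _root_.smul_apply, _root_.sum_apply, LinearMap.compMultilinearMap_apply,
    compLinearMap_update_id_apply]

theorem mem_ker_derivationDefect_iff {α : Fin (n + 1) → R}
    {σ : MultilinearMap R (fun _ : Fin n => M) M} {D : M →ₗ[R] M} :
    D ∈ ker (derivationDefect α σ) ↔
      ∀ x, α 0 • D (σ x) = ∑ i, α i.succ • σ (update x i (D (x i))) := by
  simp only [mem_ker, MultilinearMap.ext_iff, derivationDefect_apply,
    _root_.zero_apply, sub_eq_zero]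

def conj (g : M ≃ₗ[R] M) (σ : MultilinearMap R (fun _ : Fin n => M) M) :
    MultilinearMap R (fun _ : Fin n => M) M :=
  g.toLinearMap.compMultilinearMap (σ.compLinearMap fun _ => g.symm.toLinearMap)

theorem conj_apply (g : M ≃ₗ[R] M) (σ : MultilinearMap R (fun _ : Fin n => M) M)
    (x : Fin n → M) : σ.conj g x = g (σ fun i => g.symm (x i)) := rfl

theorem conj_eq_zero_iff (g : M ≃ₗ[R] M) {σ : MultilinearMap R (fun _ : Fin n => M) M} :
    σ.conj g = 0 ↔ σ = 0 := by
  refine ⟨fun h => ?_, fun h => by ext; simp [h, conj_apply]⟩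
  ext x
  simpa [conj_apply] using congr($h fun i => g (x i))

theorem derivationDefect_conj (α : Fin (n + 1) → R) (g : M ≃ₗ[R] M)
    (σ : MultilinearMap R (fun _ : Fin n => M) M) (D : M →ₗ[R] M) :
    derivationDefect α (σ.conj g) (g.conj D) = (derivationDefect α σ D).conj g := by
  ext x
  have hupd : ∀ i, (fun j => g.symm (update x i (g (D (g.symm (x i)))) j)) =
      update (fun j => g.symm (x j)) i (D (g.symm (x i))) := fun i => by
    change ⇑g.symm ∘ _ = _
    rw [comp_update, g.symm_apply_apply]
    rfl
  simp [derivationDefect_apply, conj_apply, LinearEquiv.conj_apply_apply, hupd]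

theorem ker_derivationDefect_conj (α : Fin (n + 1) → R) (g : M ≃ₗ[R] M)
    (σ : MultilinearMap R (fun _ : Fin n => M) M) :
    ker (derivationDefect α (σ.conj g)) =
      (ker (derivationDefect α σ)).map (g.conj : End R M →ₗ[R] End R M) := by
  ext D'
  obtain ⟨D, rfl⟩ := g.conj.surjective D'
  simp [Submodule.mem_map_equiv, derivationDefect_conj, conj_eq_zero_iff]

end Derivations

section Continuity

variable {X 𝕜 E : Type*} [TopologicalSpace X] [NontriviallyNormedField 𝕜] [CompleteSpace 𝕜]
  [NormedAddCommGroup E] [NormedSpace 𝕜 E] [FiniteDimensional 𝕜 E] {n : ℕ}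

theorem continuous_derivationDefect_apply (α : Fin (n + 1) → 𝕜)
    {p : X → MultilinearMap 𝕜 (fun _ : Fin n => E) E} (hp : ∀ y, Continuous fun x => p x y)
    (D : E →ₗ[𝕜] E) (y : Fin n → E) :
    Continuous fun x => derivationDefect α (p x) D y := by
  simp only [derivationDefect_apply]
  refine .sub ?_ (continuous_finsetSum _ fun i _ => ?_)
  · exact (D.continuous_of_finiteDimensional.comp (hp _)).const_smul (α 0)
  · exact (hp _).const_smul (α i.succ)

end Continuity

section BasisValues

variable {R M N ι κ : Type*} [CommRing R] [AddCommGroup M] [Module R M] [AddCommGroup N]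
  [Module R N]

noncomputable def basisValues (b : Basis κ R M) :
    MultilinearMap R (fun _ : ι => M) N →ₗ[R] (ι → κ) → N where
  toFun σ t := σ (b ∘ t)
  map_add' _ _ := rfl
  map_smul' _ _ := rfl

theorem ker_basisValues [Finite ι] (b : Basis κ R M) :
    ker (basisValues (ι := ι) (N := N) b) = ⊥ :=
  LinearMap.ker_eq_bot'.mpr fun σ hσ => Basis.ext_multilinear (fun _ => b) fun t =>
    (congrFun hσ t : σ (b ∘ t) = 0)

end BasisValues

end MultilinearMap

open MultilinearMap in
theorem degeneration_alpha_derivations_general (n : ℕ)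
    (μ ν : MultilinearMap ℂ (fun _ : Fin n => nV n) (nV n))
    (hdeg : ⇑ν ∈ closure (glOrbit n ⇑μ))
    (α : Fin (n + 1) → ℂ)
    (Derμ Derν : Submodule ℂ (nV n →ₗ[ℂ] nV n))
    (hDerμ : ∀ D : nV n →ₗ[ℂ] nV n, D ∈ Derμ ↔
      ∀ x : Fin n → nV n,
        α 0 • D (μ x) = ∑ i : Fin n, α i.succ • μ (Function.update x i (D (x i))))
    (hDerν : ∀ D : nV n →ₗ[ℂ] nV n, D ∈ Derν ↔
      ∀ x : Fin n → nV n,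
        α 0 • D (ν x) = ∑ i : Fin n, α i.succ • ν (Function.update x i (D (x i)))) :
    Module.finrank ℂ Derμ ≤ Module.finrank ℂ Derν := by
  have hμ : Derμ = ker (derivationDefect α μ) := by ext D; rw [hDerμ, mem_ker_derivationDefect_iff]
  have hν : Derν = ker (derivationDefect α ν) := by ext D; rw [hDerν, mem_ker_derivationDefect_iff]
  subst hμ hν
  -- pointwise convergence, the topology in which `closure (glOrbit n ⇑μ)` is taken
  let _ : TopologicalSpace (MultilinearMap ℂ (fun _ : Fin n => nV n) (nV n)) :=
    .induced DFunLike.coe inferInstance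
  have hev : ∀ x, Continuous fun σ : MultilinearMap ℂ (fun _ : Fin n => nV n) (nV n) => σ x :=
    fun x => (continuous_apply x).comp continuous_induced_dom
  -- multilinear maps carry no norm, but their values on basis tuples form an injective
  -- linear image in a finite-dimensional normed space
  let b := Pi.basisFun ℂ (Fin (n + 1))
  have hsemi := upperSemicontinuous_finrank_ker
    (f := fun σ => basisValues b ∘ₗ derivationDefect α σ) fun D => continuous_pi fun t =>
      continuous_derivationDefect_apply α hev D (b ∘ t)
  have hker : ∀ σ, ker (basisValues b ∘ₗ derivationDefect α σ) = ker (derivationDefect α σ) :=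
    fun σ => ker_comp_of_ker_eq_bot _ (ker_basisValues b)
  have hnear := hsemi ν _ (Nat.lt_succ_self _)
  rw [nhds_induced, Filter.eventually_comap] at hnear
  obtain ⟨_, hσ, g, rfl⟩ := (hnear.and_frequently (mem_closure_iff_frequently.mp hdeg)).exists
  have hconj := hσ (μ.conj g) rfl
  dsimp only at hconj
  rw [hker, hker, ker_derivationDefect_conj, LinearEquiv.finrank_map_eq] at hconj
  exact Nat.le_of_lt_succ hconj

/-- If `ν` lies in the closure of the `GL(V)`-orbit of `μ`, then for every
`(α) = (α₀, …, αₙ) ∈ ℂ^{n+1}` the space of `(α)`-derivations of `μ` (the linear maps `D`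
with `α₀ D(μ(x₁,…,xₙ)) = Σᵢ αᵢ μ(x₁,…,D(xᵢ),…,xₙ)`) has dimension at most that of the
space of `(α)`-derivations of `ν`. -/
theorem degeneration_alpha_derivations (n : ℕ) (hn : 2 ≤ n)
    (μ ν : MultilinearMap ℂ (fun _ : Fin n => nV n) (nV n))
    (hdeg : ⇑ν ∈ closure (glOrbit n ⇑μ))
    (α : Fin (n + 1) → ℂ)
    (Derμ Derν : Submodule ℂ (nV n →ₗ[ℂ] nV n))
    (hDerμ : ∀ D : nV n →ₗ[ℂ] nV n, D ∈ Derμ ↔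
      ∀ x : Fin n → nV n,
        α 0 • D (μ x) = ∑ i : Fin n, α i.succ • μ (Function.update x i (D (x i))))
    (hDerν : ∀ D : nV n →ₗ[ℂ] nV n, D ∈ Derν ↔
      ∀ x : Fin n → nV n,
        α 0 • D (ν x) = ∑ i : Fin n, α i.succ • ν (Function.update x i (D (x i)))) :
    Module.finrank ℂ Derμ ≤ Module.finrank ℂ Derν :=
  degeneration_alpha_derivations_general n μ ν hdeg α Derμ Derν hDerμ hDerν
end
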